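/- arXiv:1712.04262 — 4 statements merged into one kernel-verified Lean document; each statement's English description precedes it below -/
import Mathlib

section
/- Let K be a field, n > k ≥ 1 integers, R = K[x₁,…,xₙ], and let I_{n,k} be the ideal of R generated by all (k+1)-minors of the (k+1)×n Vandermonde matrix M_{n,k} whose (i,j)-entry is x_j^{i-1}. Then the quotient ring R/I_{n,k} is a reduced ring. -/
/-!
A substitution `xᵢ ↦ x_{β i}` with `β : Fin n → Fin k` identifies two of any `k + 1` variables,
so it kills every maximal minor of `M_{n,k}`, a Vandermonde product `∏_{i<j} (x_{g j} - x_{g i})`.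
Conversely, a polynomial `p` killed by all these substitutions lies in `I_{n,k}`, by induction
on `n`. As a polynomial in `x₀`, `p` has coefficients killed by all substitutions into `k - 1`
variables, hence in `I_{n-1,k-1}`. Dividing by the monic `∏ⱼ (x₀ - x_{g j})` attached to each
generator of `I_{n-1,k-1}` reduces `p` modulo `I_{n,k}` to some `r` of degree `< k` in `x₀`.
After any substitution of the other variables into `k` of them, `r` has the `k` roots
`x₀ = x_b`, so it vanishes; thus the coefficients of `r` lie in `I_{n-1,k}`.
So `I_{n,k}` is an intersection of kernels of maps into domains, hence radical.
-/

open MvPolynomial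

/-- The `(k+1) × n` Vandermonde matrix of variables: the `(i,j)` entry is `xⱼ^i`
(rows indexed by `0,…,k`, columns by the variables `x₁,…,xₙ`). -/
noncomputable def vandermondeMatrix (K : Type*) [Field K] (n k : ℕ) :
    Matrix (Fin (k + 1)) (Fin n) (MvPolynomial (Fin n) K) :=
  Matrix.of fun i j => (X j : MvPolynomial (Fin n) K) ^ (i : ℕ)

/-- The ideal generated by all maximal (i.e. `(k+1)`-size) minors of the
Vandermonde matrix `vandermondeMatrix K n k`. -/
noncomputable def vanIdeal (K : Type*) [Field K] (n k : ℕ) :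
    Ideal (MvPolynomial (Fin n) K) :=
  Ideal.span { d | ∃ g : Fin (k + 1) ↪ Fin n,
    d = ((vandermondeMatrix K n k).submatrix id g).det }

open Finset

noncomputable def vandermondeProd (R : Type*) [CommRing R] {σ : Type*} {N : ℕ} (f : Fin N → σ) :
    MvPolynomial σ R :=
  ∏ i, ∏ j ∈ Ioi i, (X (f j) - X (f i))

noncomputable def vandermondeProdIdeal (R : Type*) [CommRing R] (n k : ℕ) :
    Ideal (MvPolynomial (Fin n) R) :=
  Ideal.span (Set.range fun g : Fin (k + 1) ↪ Fin n => vandermondeProd R g)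

/-- Over an infinite domain, this is the vanishing ideal of the points with at most `k` distinct
coordinates. -/
noncomputable def renameKer (R : Type*) [CommRing R] (n k : ℕ) : Ideal (MvPolynomial (Fin n) R) :=
  ⨅ β : Fin n → Fin k, RingHom.ker (rename β)

section

variable {R : Type*} [CommRing R]

section vandermondeProd

variable {σ τ : Type*} {N : ℕ}

theorem rename_vandermondeProd (β : σ → τ) (f : Fin N → σ) :
    rename β (vandermondeProd R f) = vandermondeProd R (β ∘ f) := by
  simp [vandermondeProd]

theorem vandermondeProd_eq_zero_of_not_injective {f : Fin N → σ}
    (hf : ¬ Function.Injective f) : vandermondeProd R f = 0 := by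
  obtain ⟨a, b, hab, hne⟩ : ∃ a b, f a = f b ∧ a ≠ b := by
    simpa [Function.Injective] using hf
  wlog hlt : a < b generalizing a b
  · exact this b a hab.symm hne.symm (lt_of_le_of_ne (not_lt.1 hlt) hne.symm)
  exact prod_eq_zero (mem_univ a) (prod_eq_zero (mem_Ioi.2 hlt) (by rw [hab, sub_self]))

theorem vandermondeProd_cons (a : σ) (f : Fin N → σ) :
    vandermondeProd R (Fin.cons a f : Fin (N + 1) → σ)
      = (∏ j, (X (f j) - X a)) * vandermondeProd R f := by
  simp [vandermondeProd, Fin.prod_univ_succ]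

theorem prod_X_sub_mul_vandermondeProd (a : σ) (f : Fin N → σ) :
    (∏ j, (X a - X (f j))) * vandermondeProd R f
      = (-1) ^ N * vandermondeProd R (Fin.cons a f : Fin (N + 1) → σ) := by
  have h := prod_neg (s := univ) fun j => (X (f j) - X a : MvPolynomial σ R)
  simp only [neg_sub, card_univ, Fintype.card_fin] at h
  rw [vandermondeProd_cons, ← mul_assoc, ← h]

end vandermondeProd

theorem vanIdeal_eq_vandermondeProdIdeal (K : Type*) [Field K] (n k : ℕ) :
    vanIdeal K n k = vandermondeProdIdeal K n k := by
  have hdet (g : Fin (k + 1) ↪ Fin n) :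
      ((vandermondeMatrix K n k).submatrix id g).det = vandermondeProd K g := by
    rw [← Matrix.det_transpose]
    exact Matrix.det_vandermonde _
  simp only [vanIdeal, vandermondeProdIdeal, hdet]
  congr 1
  ext
  simp [eq_comm]

section renameKer

variable {n k : ℕ}

theorem mem_renameKer {p : MvPolynomial (Fin n) R} :
    p ∈ renameKer R n k ↔ ∀ β : Fin n → Fin k, rename β p = 0 := by
  simp [renameKer, Submodule.mem_iInf]

theorem renameKer_eq_bot (h : n ≤ k) : renameKer R n k = ⊥ :=
  eq_bot_iff.2 fun _ hp =>
    rename_injective _ (Fin.castLE_injective h) ((mem_renameKer.1 hp _).trans (map_zero _).symm)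

theorem renameKer_isRadical [IsDomain R] : (renameKer R n k).IsRadical :=
  Ideal.isRadical_iInf _ fun _ => (RingHom.ker_isPrime _).isRadical

theorem vandermondeProdIdeal_le_renameKer : vandermondeProdIdeal R n k ≤ renameKer R n k := by
  refine Ideal.span_le.2 ?_
  rintro _ ⟨g, rfl⟩
  refine mem_renameKer.2 fun β => ?_
  rw [rename_vandermondeProd]
  refine vandermondeProd_eq_zero_of_not_injective fun h => ?_
  simpa using Fintype.card_le_of_injective _ h

end renameKer

section succ

variable {m k : ℕ}

theorem vandermondeProdIdeal_zero : vandermondeProdIdeal R (m + 1) 0 = ⊤ :=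
  (Ideal.eq_top_iff_one _).2 <| Ideal.subset_span
    ⟨⟨fun _ => 0, fun a b _ => Subsingleton.elim (α := Fin 1) a b⟩, by simp [vandermondeProd]⟩

theorem map_rename_succ_vandermondeProdIdeal_le :
    (vandermondeProdIdeal R m k).map (rename Fin.succ) ≤ vandermondeProdIdeal R (m + 1) k := by
  rw [vandermondeProdIdeal, Ideal.map_span, Ideal.span_le]
  rintro _ ⟨_, ⟨g, rfl⟩, rfl⟩
  exact Ideal.subset_span ⟨g.trans (Fin.succEmb m), by rw [rename_vandermondeProd]; rfl⟩

theorem prod_X_zero_sub_mul_rename_mem (g : Fin (k + 1) ↪ Fin m) :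
    (∏ j, (X 0 - X (g j).succ)) * rename Fin.succ (vandermondeProd R g)
      ∈ vandermondeProdIdeal R (m + 1) (k + 1) := by
  have h0 : (0 : Fin (m + 1)) ∉ Set.range (g.trans (Fin.succEmb m)) := by
    simp [Fin.succ_ne_zero]
  have hmem : vandermondeProd R (Fin.Embedding.cons _ h0)
      ∈ vandermondeProdIdeal R (m + 1) (k + 1) :=
    Ideal.subset_span ⟨_, rfl⟩
  rw [rename_vandermondeProd]
  convert Ideal.mul_mem_left _ ((-1) ^ (k + 1)) hmem using 1
  exact prod_X_sub_mul_vandermondeProd 0 _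

theorem finSuccEquiv_rename_succ (a : MvPolynomial (Fin m) R) :
    finSuccEquiv R m (rename Fin.succ a) = Polynomial.C a := by
  induction a using MvPolynomial.induction_on with
  | C r => simp [finSuccEquiv_apply]
  | add p q hp hq => simp [hp, hq]
  | mul_X p i hp => simp [hp, finSuccEquiv_X_succ]

theorem map_rename_finSuccEquiv (β : Fin m → Fin k) (p : MvPolynomial (Fin (m + 1)) R) :
    (finSuccEquiv R m p).map (rename β).toRingHom
      = finSuccEquiv R k (rename (Fin.cons 0 (Fin.succ ∘ β)) p) := by
  rw [AlgHom.toRingHom_eq_coe]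
  induction p using MvPolynomial.induction_on with
  | C r => simp [finSuccEquiv_apply]
  | add p q hp hq => simp [hp, hq]
  | mul_X p i hp =>
    induction i using Fin.cases <;> simp [hp, finSuccEquiv_X_zero, finSuccEquiv_X_succ]

theorem eval_map_rename_finSuccEquiv (β : Fin m → Fin k) (b : Fin k)
    (p : MvPolynomial (Fin (m + 1)) R) :
    ((finSuccEquiv R m p).map (rename β).toRingHom).eval (X b) = rename (Fin.cons b β) p := by
  rw [AlgHom.toRingHom_eq_coe]
  induction p using MvPolynomial.induction_on with
  | C r => simp [finSuccEquiv_apply]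
  | add p q hp hq => simp [hp, hq]
  | mul_X p i hp =>
    induction i using Fin.cases <;> simp [hp, finSuccEquiv_X_zero, finSuccEquiv_X_succ]

theorem mem_map_rename_succ_iff {J : Ideal (MvPolynomial (Fin m) R)}
    {p : MvPolynomial (Fin (m + 1)) R} :
    p ∈ J.map (rename Fin.succ) ↔ ∀ i, (finSuccEquiv R m p).coeff i ∈ J := by
  have : rename Fin.succ = (finSuccEquiv R m).symm.toAlgHom.comp Polynomial.CAlgHom := by
    ext a : 1
    simp [← finSuccEquiv_rename_succ]
  rw [this, ← Ideal.map_mapₐ]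
  change p ∈ Ideal.map (finSuccEquiv R m).toRingEquiv.symm (Ideal.map Polynomial.C J) ↔ _
  rw [Ideal.map_symm, Ideal.mem_comap, Ideal.mem_map_C_iff]
  rfl

theorem mem_map_renameKer_iff {p : MvPolynomial (Fin (m + 1)) R} :
    p ∈ (renameKer R m k).map (rename Fin.succ) ↔
      ∀ β : Fin m → Fin k, (finSuccEquiv R m p).map (rename β).toRingHom = 0 := by
  simp only [mem_map_rename_succ_iff, mem_renameKer, Polynomial.ext_iff, Polynomial.coeff_map,
    Polynomial.coeff_zero]
  exact forall_comm

theorem renameKer_succ_le_map :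
    renameKer R (m + 1) (k + 1) ≤ (renameKer R m k).map (rename Fin.succ) := fun p hp =>
  mem_map_renameKer_iff.2 fun β => by
    rw [map_rename_finSuccEquiv, mem_renameKer.1 hp, map_zero]

/-- Each specialisation of the coefficients of `p` is a polynomial of degree `< k` in one
variable with the `k` roots `X b`. -/
theorem mem_map_renameKer_of_natDegree_lt [IsDomain R] {p : MvPolynomial (Fin (m + 1)) R}
    (hp : p ∈ renameKer R (m + 1) k) (hdeg : (finSuccEquiv R m p).natDegree < k) :
    p ∈ (renameKer R m k).map (rename Fin.succ) :=
  mem_map_renameKer_iff.2 fun β =>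
    Polynomial.eq_zero_of_natDegree_lt_card_of_eval_eq_zero _ (f := fun b : Fin k => X b)
      (X_injective (R := R))
      (fun b => by rw [eval_map_rename_finSuccEquiv, mem_renameKer.1 hp])
      (by simpa using Polynomial.natDegree_map_le.trans_lt hdeg)

/-- Take for `r` the remainder of `a` modulo `∏ j, (X 0 - X (g j).succ)`, as a polynomial in
`X 0`, times the Vandermonde product. -/
theorem exists_mul_rename_vandermondeProd_sub_mem [Nontrivial R] (g : Fin (k + 1) ↪ Fin m)
    (a : MvPolynomial (Fin (m + 1)) R) :
    ∃ r, a * rename Fin.succ (vandermondeProd R g) - r ∈ vandermondeProdIdeal R (m + 1) (k + 1)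
      ∧ (finSuccEquiv R m r).natDegree < k + 1 := by
  set P : Polynomial (MvPolynomial (Fin m) R) := ∏ j, (Polynomial.X - Polynomial.C (X (g j)))
  have hP : P.Monic := Polynomial.monic_prod_of_monic _ _ fun j _ => Polynomial.monic_X_sub_C _
  have hPdeg : P.natDegree = k + 1 := by
    rw [Polynomial.natDegree_prod_of_monic _ _ fun j _ => Polynomial.monic_X_sub_C (X (g j))]
    simp
  have hP_symm : (finSuccEquiv R m).symm P = ∏ j, (X 0 - X (g j).succ) := by
    rw [AlgEquiv.symm_apply_eq]
    simp [P, finSuccEquiv_X_zero, finSuccEquiv_X_succ]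
  set q := finSuccEquiv R m a
  refine ⟨(finSuccEquiv R m).symm (q %ₘ P) * rename Fin.succ (vandermondeProd R g), ?_, ?_⟩
  · have ha : a = (finSuccEquiv R m).symm (q %ₘ P)
        + (finSuccEquiv R m).symm P * (finSuccEquiv R m).symm (q /ₘ P) := by
      rw [← map_mul, ← map_add, Polynomial.modByMonic_add_div, AlgEquiv.symm_apply_apply]
    have hdiff : a * rename Fin.succ (vandermondeProd R g)
          - (finSuccEquiv R m).symm (q %ₘ P) * rename Fin.succ (vandermondeProd R g)
        = (finSuccEquiv R m).symm (q /ₘ P)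
          * ((∏ j, (X 0 - X (g j).succ)) * rename Fin.succ (vandermondeProd R g)) := by
      rw [← hP_symm]
      nth_rewrite 1 [ha]
      ring
    rw [hdiff]
    exact Ideal.mul_mem_left _ _ (prod_X_zero_sub_mul_rename_mem g)
  · rw [map_mul, AlgEquiv.apply_symm_apply, finSuccEquiv_rename_succ]
    calc _ ≤ (q %ₘ P).natDegree := Polynomial.natDegree_mul_C_le _ _
      _ < P.natDegree := Polynomial.natDegree_modByMonic_lt _ hP fun h => by simp [h] at hPdeg
      _ = k + 1 := hPdeg

theorem exists_sub_mem_vandermondeProdIdeal_natDegree_lt [Nontrivial R]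
    {p : MvPolynomial (Fin (m + 1)) R}
    (hp : p ∈ (vandermondeProdIdeal R m k).map (rename Fin.succ)) :
    ∃ r, p - r ∈ vandermondeProdIdeal R (m + 1) (k + 1)
      ∧ (finSuccEquiv R m r).natDegree < k + 1 := by
  rw [vandermondeProdIdeal, Ideal.map_span, ← Set.range_comp,
    Ideal.mem_span_range_iff_exists_fun] at hp
  obtain ⟨c, rfl⟩ := hp
  choose r hr hdeg using fun g => exists_mul_rename_vandermondeProd_sub_mem g (c g)
  refine ⟨∑ g, r g, ?_, ?_⟩
  · rw [← sum_sub_distrib]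
    exact sum_mem fun g _ => hr g
  · rw [map_sum, Nat.lt_succ_iff]
    exact Polynomial.natDegree_sum_le_of_forall_le _ _ fun g _ => Nat.lt_succ_iff.1 (hdeg g)

end succ

theorem renameKer_le_vandermondeProdIdeal [IsDomain R] (n k : ℕ) :
    renameKer R n k ≤ vandermondeProdIdeal R n k := by
  induction n generalizing k with
  | zero => simp [renameKer_eq_bot (Nat.zero_le k)]
  | succ m ih =>
    rcases k with _ | k
    · simp [vandermondeProdIdeal_zero]
    by_cases hmk : m + 1 ≤ k + 1
    · simp [renameKer_eq_bot hmk]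
    intro p hp
    obtain ⟨r, hpr, hdeg⟩ := exists_sub_mem_vandermondeProdIdeal_natDegree_lt
      (Ideal.map_mono (ih k) (renameKer_succ_le_map hp))
    have hr_ker : r ∈ renameKer R (m + 1) (k + 1) := by
      simpa using sub_mem hp (vandermondeProdIdeal_le_renameKer hpr)
    have hr_mem : r ∈ vandermondeProdIdeal R (m + 1) (k + 1) :=
      map_rename_succ_vandermondeProdIdeal_le
        (Ideal.map_mono (ih (k + 1)) (mem_map_renameKer_of_natDegree_lt hr_ker hdeg))
    simpa using add_mem hpr hr_mem

theorem vanIdeal_eq_renameKer (K : Type*) [Field K] (n k : ℕ) :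
    vanIdeal K n k = renameKer K n k :=
  (vanIdeal_eq_vandermondeProdIdeal K n k).trans <|
    vandermondeProdIdeal_le_renameKer.antisymm (renameKer_le_vandermondeProdIdeal n k)

end

theorem vanIdeal_quotient_isReduced_general (K : Type*) [Field K] (n k : ℕ) :
    IsReduced (MvPolynomial (Fin n) K ⧸ vanIdeal K n k) := by
  rw [vanIdeal_eq_renameKer, ← Ideal.isRadical_iff_quotient_reduced]
  exact renameKer_isRadical

/-- Vandermonde determinantal ideals: `R ⧸ I_{n,k}` is a reduced ring. -/
theorem vanIdeal_quotient_isReduced (K : Type*) [Field K] (n k : ℕ)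
    (hk : 1 ≤ k) (hn : k < n) :
    IsReduced (MvPolynomial (Fin n) K ⧸ vanIdeal K n k) :=
  vanIdeal_quotient_isReduced_general K n k
end

section
/- Let K be a field, n > k ≥ 1 integers, R = K[x₁,…,xₙ], and I_{n,k} the ideal generated by all (k+1)-minors of the (k+1)×n Vandermonde matrix M_{n,k}. Then the height of I_{n,k} in R equals n − k. -/
open MvPolynomial

/-! For an idempotent map `r` on the variables, `ker (rename r)` is the prime ideal of the linear
subspace `{xᵢ = x_{r i}}`. It is generated by the `n - |im r|` linear forms `xᵢ - x_{r i}`, and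
un-identifying the variables one at a time gives a chain of primes of that length below it, so its
height is exactly `n - |im r|` (Krull's height theorem for `≤`).

A maximal minor of `M_{n,k}` is a Vandermonde determinant `∏ (x_{g j} - x_{g i})`, so a prime `P`
contains `I_{n,k}` iff the variables take at most `k` distinct values modulo `P`. Hence every such
`P` contains a kernel with `|im r| ≤ k`, of height `≥ n - k`, while `r j = max j (n - k)` gives one
of height exactly `n - k` that contains `I_{n,k}`. -/

open Finset

section

variable {R σ : Type*} [CommRing R]

theorem ker_rename_le {J : Ideal (MvPolynomial σ R)} {r : σ → σ}
    (h : ∀ i, X i - X (r i) ∈ J) : RingHom.ker (rename r) ≤ J := by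
  intro p hp
  have hmk : (Ideal.Quotient.mkₐ R J).comp (rename r) = Ideal.Quotient.mkₐ R J :=
    algHom_ext fun i => by simpa [Ideal.Quotient.eq] using J.neg_mem (h i)
  rw [← Ideal.Quotient.eq_zero_iff_mem, ← Ideal.Quotient.mkₐ_eq_mk R, ← hmk]
  simp [(RingHom.mem_ker).mp hp]

variable {r : σ → σ}

theorem X_sub_X_mem_ker_rename (hr : ∀ i, r (r i) = r i) (i : σ) :
    X i - X (r i) ∈ RingHom.ker (rename r : MvPolynomial σ R →ₐ[R] MvPolynomial σ R) := by
  simp [hr]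

theorem ker_rename_update_lt [DecidableEq σ] [Nontrivial R] (hr : ∀ i, r (r i) = r i) {v : σ}
    (hv : r v ≠ v) :
    RingHom.ker (rename (Function.update r v v) : MvPolynomial σ R →ₐ[R] MvPolynomial σ R) <
      RingHom.ker (rename r) := by
  have hcomp : r ∘ Function.update r v v = r := by
    ext i; by_cases hi : i = v <;> simp [hi, hr]
  refine lt_of_le_of_ne (fun p hp => ?_) fun heq => ?_
  · rw [RingHom.mem_ker] at hp ⊢
    rw [← hcomp, ← rename_rename, hp, map_zero]
  · have hmem := X_sub_X_mem_ker_rename (R := R) hr v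
    rw [← heq, RingHom.mem_ker, map_sub, rename_X, rename_X, Function.update_self,
      Function.update_of_ne hv, hr, sub_eq_zero] at hmem
    exact hv (X_injective hmem).symm

variable [Fintype σ] [DecidableEq σ]

theorem card_filter_ne_add_card_image (hr : ∀ i, r (r i) = r i) :
    #{i | r i ≠ i} + #(univ.image r) = Fintype.card σ := by
  have hfix : ({i | r i = i} : Finset σ) = univ.image r := by
    ext i
    simp only [mem_filter, mem_univ, true_and, mem_image]
    exact ⟨fun h => ⟨i, h⟩, fun ⟨j, hj⟩ => hj ▸ hr j⟩
  rw [← hfix, add_comm]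
  exact card_filter_add_card_filter_not _

variable [IsDomain R]

theorem card_filter_ne_le_height_ker_rename (hr : ∀ i, r (r i) = r i) :
    (#{i | r i ≠ i} : ℕ∞) ≤
      (RingHom.ker (rename r : MvPolynomial σ R →ₐ[R] MvPolynomial σ R)).height := by
  induction hm : #{i | r i ≠ i} generalizing r with
  | zero => simp
  | succ m ih =>
    obtain ⟨v, hv⟩ : ∃ v, r v ≠ v := by
      by_contra! h
      simp [h] at hm
    set r' := Function.update r v v
    have hr' : ∀ i, r' (r' i) = r' i := by
      intro i
      by_cases hi : i = v
      · simp [r', hi]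
      · have hri : r i ≠ v := fun h => hv (by rw [← h, hr])
        simp [r', hi, hri, hr]
    have hm' : #{i | r' i ≠ i} = m := by
      have : ({i | r' i ≠ i} : Finset σ) = ({i | r i ≠ i} : Finset σ).erase v := by
        ext i
        by_cases hi : i = v <;> simp [r', hi]
      rw [this, card_erase_of_mem (by simpa using hv), hm, Nat.add_sub_cancel]
    have := RingHom.ker_isPrime (rename r' : MvPolynomial σ R →ₐ[R] MvPolynomial σ R)
    have := RingHom.ker_isPrime (rename r : MvPolynomial σ R →ₐ[R] MvPolynomial σ R)
    calc ((m + 1 : ℕ) : ℕ∞) = (m : ℕ∞) + 1 := Nat.cast_succ m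
      _ ≤ (RingHom.ker (rename r' : MvPolynomial σ R →ₐ[R] MvPolynomial σ R)).height + 1 := by
        gcongr; exact ih hr' hm'
      _ ≤ _ := Ideal.height_add_one_le_of_lt_of_isPrime (ker_rename_update_lt hr hv)

theorem height_ker_rename_le_card_filter_ne [IsNoetherianRing R] (hr : ∀ i, r (r i) = r i) :
    (RingHom.ker (rename r : MvPolynomial σ R →ₐ[R] MvPolynomial σ R)).height ≤
      #{i | r i ≠ i} := by
  classical
  set s : Finset (MvPolynomial σ R) := ({i | r i ≠ i} : Finset σ).image fun i => X i - X (r i)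
  have hspan : RingHom.ker (rename r) = Ideal.span (s : Set (MvPolynomial σ R)) := by
    refine le_antisymm (ker_rename_le fun i => ?_) (Ideal.span_le.mpr ?_)
    · by_cases hi : r i = i
      · simp [hi]
      · exact Ideal.subset_span (mem_coe.mpr (mem_image_of_mem _ (by simpa using hi)))
    · intro p hp
      obtain ⟨i, -, rfl⟩ := mem_image.mp hp
      exact X_sub_X_mem_ker_rename hr i
  have := RingHom.ker_isPrime (rename r : MvPolynomial σ R →ₐ[R] MvPolynomial σ R)
  calc _ ≤ (#s : ℕ∞) := Ideal.height_le_card_of_mem_minimalPrimes_span_finset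
          (by rw [← hspan, Ideal.minimalPrimes_eq_subsingleton_self]; rfl)
    _ ≤ _ := Nat.cast_le.mpr card_image_le

theorem height_ker_rename (hr : ∀ i, r (r i) = r i) [IsNoetherianRing R] :
    (RingHom.ker (rename r : MvPolynomial σ R →ₐ[R] MvPolynomial σ R)).height =
      (Fintype.card σ - #(univ.image r) : ℕ) := by
  rw [← card_filter_ne_add_card_image hr, Nat.add_sub_cancel]
  exact le_antisymm (height_ker_rename_le_card_filter_ne hr)
    (card_filter_ne_le_height_ker_rename hr)

end

open Matrix in
theorem Matrix.det_vandermonde_mem_iff {R : Type*} [CommRing R] {P : Ideal R} [P.IsPrime] {m : ℕ}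
    (v : Fin m → R) : (vandermonde v).det ∈ P ↔ ∃ a b, a ≠ b ∧ v a - v b ∈ P := by
  simp only [det_vandermonde, Ideal.IsPrime.prod_mem_iff, mem_Ioi, mem_univ, true_and]
  constructor
  · rintro ⟨i, j, hij, h⟩
    exact ⟨j, i, hij.ne', h⟩
  · rintro ⟨a, b, hab, h⟩
    rcases hab.lt_or_gt with hab | hab
    · exact ⟨a, b, hab, by simpa using P.neg_mem h⟩
    · exact ⟨b, a, hab, h⟩

section

variable {K : Type*} [Field K] {n k : ℕ}

theorem det_vandermondeMatrix_submatrix_mem_iff {P : Ideal (MvPolynomial (Fin n) K)} [P.IsPrime]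
    (g : Fin (k + 1) ↪ Fin n) :
    ((vandermondeMatrix K n k).submatrix id g).det ∈ P ↔ ∃ a b, a ≠ b ∧ X (g a) - X (g b) ∈ P := by
  have : (vandermondeMatrix K n k).submatrix id g =
      (Matrix.vandermonde fun i => X (g i)).transpose := by
    ext i j
    simp [vandermondeMatrix, Matrix.vandermonde]
  rw [this, Matrix.det_transpose, Matrix.det_vandermonde_mem_iff]

theorem vanIdeal_le_ker_rename {c : Fin n → Fin n} (hc : #(univ.image c) ≤ k) :
    vanIdeal K n k ≤
      RingHom.ker (rename c : MvPolynomial (Fin n) K →ₐ[K] MvPolynomial (Fin n) K) := by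
  have := RingHom.ker_isPrime (rename c : MvPolynomial (Fin n) K →ₐ[K] MvPolynomial (Fin n) K)
  rw [vanIdeal, Ideal.span_le]
  rintro _ ⟨g, rfl⟩
  obtain ⟨a, -, b, -, hab, hcg⟩ := exists_ne_map_eq_of_card_lt_of_maps_to (s := univ)
    (t := univ.image c) (f := c ∘ g) (by simpa using Nat.lt_succ_of_le hc)
    (fun a _ => mem_image_of_mem _ (mem_univ _))
  exact (det_vandermondeMatrix_submatrix_mem_iff g).mpr ⟨a, b, hab, by simp_all⟩

theorem exists_idempotent_of_vanIdeal_le {P : Ideal (MvPolynomial (Fin n) K)} [P.IsPrime]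
    (h : vanIdeal K n k ≤ P) :
    ∃ r : Fin n → Fin n, (∀ i, r (r i) = r i) ∧ #(univ.image r) ≤ k ∧ ∀ i, X i - X (r i) ∈ P := by
  classical
  set f : Fin n → MvPolynomial (Fin n) K ⧸ P := fun i => Ideal.Quotient.mk P (X i)
  have hf : ∀ i j, f i = f j ↔ X i - X j ∈ P := fun i j => Ideal.Quotient.eq
  have hcard : #(univ.image f) ≤ k := by
    by_contra! hlt
    obtain ⟨t, ht, htcard⟩ := exists_subset_card_eq (Nat.succ_le_of_lt hlt)
    set e : Fin (k + 1) ≃ t := (t.equivFinOfCardEq htcard).symm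
    choose g hg using fun a => mem_image.mp (ht (e a).2)
    have hinj : ∀ a b, f (g a) = f (g b) → a = b := fun a b hab =>
      e.injective (Subtype.ext (by rw [← (hg a).2, ← (hg b).2, hab]))
    obtain ⟨a, b, hab, hmem⟩ := (det_vandermondeMatrix_submatrix_mem_iff
      ⟨g, fun a b hab => hinj a b (congrArg f hab)⟩).mp (h (Ideal.subset_span ⟨_, rfl⟩))
    exact hab (hinj a b ((hf _ _).mpr hmem))
  set r : Fin n → Fin n := fun i => (Quotient.mk (Setoid.ker f) i).out
  have hfr : ∀ i, f (r i) = f i := fun i => Quotient.mk_out (s := Setoid.ker f) i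
  refine ⟨r, fun i => congrArg Quotient.out (Quotient.out_eq _), ?_,
    fun i => (hf _ _).mp (hfr i).symm⟩
  refine (card_le_card_of_injOn f (fun _ _ => by simp) ?_).trans hcard
  intro _ hi _ hj hij
  obtain ⟨i, -, rfl⟩ := mem_image.mp hi
  obtain ⟨j, -, rfl⟩ := mem_image.mp hj
  rw [hfr, hfr] at hij
  exact congrArg Quotient.out (Quotient.sound hij)

theorem sub_le_height_of_vanIdeal_le {P : Ideal (MvPolynomial (Fin n) K)} [P.IsPrime]
    (h : vanIdeal K n k ≤ P) : ((n - k : ℕ) : ℕ∞) ≤ P.height := by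
  obtain ⟨r, hr, hcard, hsub⟩ := exists_idempotent_of_vanIdeal_le h
  calc ((n - k : ℕ) : ℕ∞) ≤ (n - #(univ.image r) : ℕ) := Nat.cast_le.mpr (by omega)
    _ = (RingHom.ker (rename r : MvPolynomial (Fin n) K →ₐ[K] _)).height := by
      rw [height_ker_rename hr, Fintype.card_fin]
    _ ≤ P.height := Ideal.height_mono (ker_rename_le hsub)

theorem exists_vanIdeal_le_height_eq (hk : 1 ≤ k) (hn : k < n) :
    ∃ P : PrimeSpectrum (MvPolynomial (Fin n) K), vanIdeal K n k ≤ P.asIdeal ∧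
      P.asIdeal.height = (n - k : ℕ) := by
  set r₀ : Fin n := ⟨n - k, by omega⟩
  set c : Fin n → Fin n := fun j => max j r₀
  have hcard : #(univ.image c) = k := by
    have : univ.image c = Ici r₀ := by
      ext j
      simp only [mem_image, mem_univ, true_and, mem_Ici, c]
      exact ⟨fun ⟨i, hi⟩ => hi ▸ le_max_right i r₀, fun hj => ⟨j, max_eq_left hj⟩⟩
    rw [this, Fin.card_Ici]
    simp only [r₀]
    omega
  have := RingHom.ker_isPrime (rename c : MvPolynomial (Fin n) K →ₐ[K] MvPolynomial (Fin n) K)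
  refine ⟨⟨_, this⟩, vanIdeal_le_ker_rename hcard.le, ?_⟩
  rw [height_ker_rename (fun j => by simp [c]), hcard, Fintype.card_fin]

end

/-- Vandermonde determinantal ideals: the height of `I_{n,k}` (the minimum of the heights
of the prime ideals containing it) equals `n - k`. -/
theorem vanIdeal_height (K : Type*) [Field K] (n k : ℕ)
    (hk : 1 ≤ k) (hn : k < n) :
    (⨅ (P : PrimeSpectrum (MvPolynomial (Fin n) K)) (_ : vanIdeal K n k ≤ P.asIdeal),
      Order.height P) = ((n - k : ℕ) : ℕ∞) := by
  simp only [← PrimeSpectrum.height_eq_orderHeight]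
  obtain ⟨Q, hQ, hQheight⟩ := exists_vanIdeal_le_height_eq (K := K) hk hn
  exact le_antisymm (iInf₂_le_of_le Q hQ hQheight.le)
    (le_iInf₂ fun P hP => sub_le_height_of_vanIdeal_le hP)
end

section
/- Let K be an algebraically closed field, n > k ≥ 1 integers, R = K[x₁,…,xₙ], and I_{n,k} the ideal generated by all (k+1)-minors of the (k+1)×n Vandermonde matrix M_{n,k}. For a partition Π = {F₁,…,F_k} of {1,…,n} into k nonempty blocks, let P_Π be the ideal of R generated by the differences x_i − x_j for all i, j lying in a common block of Π. Then the radical of I_{n,k} equals the intersection of the ideals P_Π over all partitions Π of {1,…,n} into exactly k nonempty blocks. -/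
open MvPolynomial

/-- For a partition `Π` of `{1,…,n}` (into nonempty blocks), `P_Π` is the ideal generated
by the differences `xᵢ - xⱼ` for all `i, j` lying in a common block of `Π`. -/
noncomputable def partitionIdeal (K : Type*) [Field K] {n : ℕ}
    (P : Finpartition (Finset.univ : Finset (Fin n))) : Ideal (MvPolynomial (Fin n) K) :=
  Ideal.span { f | ∃ i j : Fin n, ∃ F ∈ P.parts, i ∈ F ∧ j ∈ F ∧ f = X i - X j }

open Finset

namespace Finpartition

variable {α : Type*} [DecidableEq α] {s : Finset α}

/-- Split a part with at least two elements into two. -/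
theorem exists_le_card_parts_eq_succ (P : Finpartition s) (h : #P.parts < #s) :
    ∃ Q ≤ P, #Q.parts = #P.parts + 1 := by
  obtain ⟨t, ht, ht2⟩ : ∃ t ∈ P.parts, 1 < #t := by
    apply exists_lt_of_sum_lt
    rwa [sum_const, smul_eq_mul, mul_one, P.sum_card_parts]
  have hsplit : ∀ u ∈ P.parts, ∃ R : Finpartition u, #R.parts = if u = t then 2 else 1 := by
    intro u hu
    refine (exists_equipartition_card_eq u (by split_ifs <;> simp) ?_).imp fun R hR => hR.2
    split_ifs with hut
    · exact hut ▸ ht2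
    · exact card_pos.2 (P.nonempty_of_mem_parts hu)
  choose R hR using hsplit
  refine ⟨P.bind R, fun b hb => ?_, ?_⟩
  · obtain ⟨u, hu, hbu⟩ := mem_bind.1 hb
    exact ⟨u, hu, (R u hu).le hbu⟩
  · simp only [card_bind, hR]
    rw [sum_attach P.parts fun u => if u = t then 2 else 1, sum_ite, filter_eq', if_pos ht]
    simp only [sum_const, card_singleton, smul_eq_mul, mul_one, filter_ne', card_erase_of_mem ht]
    have := card_pos.2 ⟨t, ht⟩
    omega

theorem exists_le_card_parts_eq (P : Finpartition s) {k : ℕ} (hPk : #P.parts ≤ k)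
    (hks : k ≤ #s) : ∃ Q ≤ P, #Q.parts = k := by
  induction k, hPk using Nat.le_induction with
  | base => exact ⟨P, le_rfl, rfl⟩
  | succ k hPk ih =>
    obtain ⟨Q, hQP, hQ⟩ := ih (by omega)
    obtain ⟨Q', hQ'Q, hQ'⟩ := Q.exists_le_card_parts_eq_succ (by omega)
    exact ⟨Q', hQ'Q.trans hQP, by omega⟩

end Finpartition

section ImageCard

variable {α β : Type*} [DecidableEq β] {f : α → β}

theorem card_image_le_card_parts [DecidableEq α] {s : Finset α} {P : Finpartition s}
    (hf : ∀ t ∈ P.parts, ∀ x ∈ t, ∀ y ∈ t, f x = f y) : #(s.image f) ≤ #P.parts := by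
  conv_lhs => rw [← P.biUnion_parts, biUnion_image]
  simpa using card_biUnion_le_card_mul P.parts (image f) 1 fun t ht =>
    card_le_one.2 <| by simpa using hf t ht

theorem exists_finpartition_card_parts_eq_of_card_image_le [DecidableEq α] {s : Finset α}
    {k : ℕ} (hfk : #(s.image f) ≤ k) (hks : k ≤ #s) :
    ∃ P : Finpartition s, #P.parts = k ∧ ∀ t ∈ P.parts, ∀ x ∈ t, ∀ y ∈ t, f x = f y := by
  let P₀ := Finpartition.ofSetSetoid (Setoid.ker f) s
  have hP₀ : ∀ t ∈ P₀.parts, ∀ x ∈ t, ∀ y ∈ t, f x = f y := by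
    intro t ht x hx y hy
    rw [← P₀.part_eq_of_mem ht hx, Finpartition.mem_part_ofSetSetoid_iff_rel] at hy
    exact hy.2.2
  have hP₀k : #P₀.parts ≤ k :=
    calc #P₀.parts = #((s.image f).image fun v => {y ∈ s | v = f y}) := by
          rw [Finpartition.ofSetSetoid_parts, image_image]
          rfl
      _ ≤ k := card_image_le.trans hfk
  obtain ⟨P, hPP₀, hP⟩ := P₀.exists_le_card_parts_eq hP₀k hks
  refine ⟨P, hP, fun t ht x hx y hy => ?_⟩
  obtain ⟨u, hu, htu⟩ := hPP₀ ht
  exact hP₀ u hu x (htu hx) y (htu hy)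

theorem exists_fin_embedding_comp_injective_iff [Fintype α] {m : ℕ} :
    (∃ g : Fin m ↪ α, (f ∘ g).Injective) ↔ m ≤ #(univ.image f) := by
  constructor
  · rintro ⟨g, hg⟩
    calc m = #(univ.image (f ∘ g)) := by
          rw [card_image_of_injective _ hg, card_univ, Fintype.card_fin]
      _ ≤ #(univ.image f) :=
          card_le_card (image_subset_iff.2 fun i _ => mem_image_of_mem f (mem_univ (g i)))
  · intro hm
    obtain ⟨u, -, hu, hfu⟩ := exists_subset_injOn_image_eq_of_surjOn (f := f) Set.univ
      (univ.image f) (by simp [Set.SurjOn])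
    obtain ⟨e⟩ : Nonempty (Fin m ↪ u) :=
      Function.Embedding.nonempty_of_card_le (by simpa [← hfu, card_image_of_injOn hu] using hm)
    exact ⟨e.trans (Function.Embedding.subtype _),
      fun i j hij => e.injective (Subtype.ext (hu (e i).2 (e j).2 hij))⟩

end ImageCard

namespace MvPolynomial

variable {σ R : Type*} [CommRing R] {I : Ideal (MvPolynomial σ R)} {r : σ → σ}

theorem sub_rename_mem_of_forall_X_sub_X_mem (h : ∀ i, X i - X (r i) ∈ I)
    (f : MvPolynomial σ R) : f - rename r f ∈ I := by
  rw [← Ideal.Quotient.eq, ← Ideal.Quotient.mkₐ_eq_mk R, ← AlgHom.comp_apply]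
  congr 1
  refine algHom_ext fun i => ?_
  simpa [Ideal.Quotient.eq] using h i

theorem ker_rename_eq_of_forall_X_sub_X_mem (h : ∀ i, X i - X (r i) ∈ I)
    (hI : I ≤ RingHom.ker (rename r : MvPolynomial σ R →ₐ[R] _)) :
    RingHom.ker (rename r : MvPolynomial σ R →ₐ[R] _) = I := by
  refine le_antisymm (fun f hf => ?_) hI
  simpa [RingHom.mem_ker.1 hf] using sub_rename_mem_of_forall_X_sub_X_mem h f

theorem vanishingIdeal_iUnion {K : Type*} [Field K] {ι : Sort*} (s : ι → Set (σ → K)) :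
    vanishingIdeal K (⋃ i, s i) = ⨅ i, vanishingIdeal K (s i) :=
  zeroLocus_vanishingIdeal_galoisConnection.u_iInf

end MvPolynomial

section VandermondeIdeal

variable {K : Type*} [Field K] {n k : ℕ}

instance partitionIdeal_isPrime (P : Finpartition (univ : Finset (Fin n))) :
    (partitionIdeal K P).IsPrime := by
  let r : Fin n → Fin n := fun i => (P.part i).min' ⟨i, P.mem_part (mem_univ i)⟩
  have hX : ∀ i, X i - X (r i) ∈ partitionIdeal K P := fun i =>
    Ideal.subset_span ⟨i, r i, P.part i, P.part_mem.2 (mem_univ i), P.mem_part (mem_univ i),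
      min'_mem _ _, rfl⟩
  have hI : partitionIdeal K P ≤ RingHom.ker (rename r : MvPolynomial (Fin n) K →ₐ[K] _) := by
    rw [partitionIdeal, Ideal.span_le]
    rintro _ ⟨i, j, t, ht, hi, hj, rfl⟩
    have hij : r i = r j := by simp only [r, P.part_eq_of_mem ht hi, P.part_eq_of_mem ht hj]
    simp [hij]
  rw [← ker_rename_eq_of_forall_X_sub_X_mem hX hI]
  exact RingHom.ker_isPrime _

theorem mem_zeroLocus_partitionIdeal_iff {P : Finpartition (univ : Finset (Fin n))}
    {a : Fin n → K} :
    a ∈ zeroLocus K (partitionIdeal K P) ↔ ∀ t ∈ P.parts, ∀ i ∈ t, ∀ j ∈ t, a i = a j := by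
  rw [partitionIdeal, zeroLocus_span]
  simp only [Set.mem_ofPred_eq, forall_exists_index, and_imp]
  exact ⟨fun h t ht i hi j hj => sub_eq_zero.1 (by simpa using h _ i j t ht hi hj rfl),
    by rintro h _ i j t ht hi hj rfl; simp [h t ht i hi j hj]⟩

theorem eval_vandermondeMatrix_minor (a : Fin n → K) (g : Fin (k + 1) ↪ Fin n) :
    eval a ((vandermondeMatrix K n k).submatrix id g).det =
      (Matrix.vandermonde (a ∘ g)).det := by
  rw [RingHom.map_det, ← Matrix.det_transpose]
  congr
  ext i j
  simp [vandermondeMatrix]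

theorem mem_zeroLocus_vanIdeal_iff [DecidableEq K] {a : Fin n → K} :
    a ∈ zeroLocus K (vanIdeal K n k) ↔ #(univ.image a) ≤ k := by
  rw [vanIdeal, zeroLocus_span, ← not_lt, Nat.lt_iff_add_one_le,
    ← exists_fin_embedding_comp_injective_iff]
  simp [eval_vandermondeMatrix_minor, ← Matrix.det_vandermonde_ne_zero_iff]

theorem zeroLocus_vanIdeal_eq_iUnion (hkn : k ≤ n) :
    zeroLocus K (vanIdeal K n k) =
      ⋃ (P : Finpartition (univ : Finset (Fin n))) (_ : #P.parts = k),
        zeroLocus K (partitionIdeal K P) := by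
  classical
  ext a
  simp only [Set.mem_iUnion, mem_zeroLocus_vanIdeal_iff, mem_zeroLocus_partitionIdeal_iff,
    exists_prop]
  exact ⟨fun ha => exists_finpartition_card_parts_eq_of_card_image_le ha (by simpa using hkn),
    fun ⟨_, hP, ha⟩ => hP ▸ card_image_le_card_parts ha⟩

end VandermondeIdeal

theorem vanIdeal_radical_eq_inf_general (K : Type*) [Field K] [IsAlgClosed K] (n k : ℕ)
    (hn : k < n) :
    (vanIdeal K n k).radical =
      ⨅ (P : Finpartition (Finset.univ : Finset (Fin n))) (_ : P.parts.card = k),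
        partitionIdeal K P := by
  rw [← vanishingIdeal_zeroLocus_eq_radical (K := K), zeroLocus_vanIdeal_eq_iUnion hn.le]
  simp only [vanishingIdeal_iUnion, IsPrime.vanishingIdeal_zeroLocus]

/-- Over an algebraically closed field, the radical of the Vandermonde determinantal ideal
`I_{n,k}` is the intersection of the ideals `P_Π`, where `Π` runs over all partitions of
`{1,…,n}` into exactly `k` nonempty blocks. -/
theorem vanIdeal_radical_eq_inf (K : Type*) [Field K] [IsAlgClosed K] (n k : ℕ)
    (hk : 1 ≤ k) (hn : k < n) :
    (vanIdeal K n k).radical =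
      ⨅ (P : Finpartition (Finset.univ : Finset (Fin n))) (_ : P.parts.card = k),
        partitionIdeal K P :=
  vanIdeal_radical_eq_inf_general K n k hn
end

section
/- Let K be a field, n > k ≥ 1 integers, R = K[x₁,…,xₙ], and I_{n,k} the ideal generated by all (k+1)-minors of the (k+1)×n Vandermonde matrix M_{n,k}. Let N_{n,k} be the k×(n−1) matrix whose (i,j)-entry is x_{j+1}^i − x₁^i for i = 1,…,k and j = 1,…,n−1. Then I_{n,k} is equal to the ideal of R generated by all k-minors (maximal minors) of N_{n,k}. -/
/-!
In a maximal minor of the Vandermonde matrix, subtract `a^i` times the row of ones from row `i`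
and expand along the row of ones: the minor becomes an alternating sum of `k`-minors of the
matrix `D` with entries `x_j^i - a^i` (`1 ≤ i ≤ k`). With `a = x₁` this puts `I_{n,k}` inside the
ideal of maximal minors of `D`. If the minor uses the column of `x₁`, that column turns into
`(1, 0, …, 0)` and the minor is a single `k`-minor of `D`, which gives every maximal minor of
`N_{n,k}`. Finally, `N_{n,k}` is `D` with its zero column (the one of `x₁`) deleted, and a zero
column contributes nothing to the ideal of maximal minors.
-/

open MvPolynomial

/-- The `k × (n-1)` matrix `N_{n,k}` whose `(i,j)` entry is `x_{j+1}^i - x₁^i`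
for `i = 1,…,k` and `j = 1,…,n-1`. -/
noncomputable def nMatrix (K : Type*) [Field K] (n k : ℕ) :
    Matrix (Fin k) (Fin (n - 1)) (MvPolynomial (Fin n) K) :=
  Matrix.of fun i j =>
    (X (⟨j.1 + 1, by have := j.isLt; omega⟩ : Fin n) : MvPolynomial (Fin n) K) ^ ((i : ℕ) + 1)
      - (X (⟨0, by have := j.isLt; omega⟩ : Fin n)) ^ ((i : ℕ) + 1)

namespace Matrix

variable {R : Type*} [CommRing R] {k : ℕ}

def maxMinorsIdeal {ι : Type*} (M : Matrix (Fin k) ι R) : Ideal R :=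
  Ideal.span {d | ∃ g : Fin k ↪ ι, d = (M.submatrix id g).det}

theorem det_submatrix_mem_maxMinorsIdeal {ι : Type*} (M : Matrix (Fin k) ι R)
    (g : Fin k ↪ ι) : (M.submatrix id g).det ∈ M.maxMinorsIdeal :=
  Ideal.subset_span ⟨g, rfl⟩

theorem maxMinorsIdeal_submatrix_le {ι ι' : Type*} (M : Matrix (Fin k) ι R)
    (f : ι' ↪ ι) : (M.submatrix id f).maxMinorsIdeal ≤ M.maxMinorsIdeal := by
  refine Ideal.span_le.mpr ?_
  rintro _ ⟨g, rfl⟩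
  exact M.det_submatrix_mem_maxMinorsIdeal (g.trans f)

theorem maxMinorsIdeal_submatrix_succAbove {m : ℕ} (M : Matrix (Fin k) (Fin (m + 1)) R)
    (p : Fin (m + 1)) (hp : ∀ r, M r p = 0) :
    (M.submatrix id p.succAbove).maxMinorsIdeal = M.maxMinorsIdeal := by
  refine le_antisymm (M.maxMinorsIdeal_submatrix_le p.succAboveEmb) (Ideal.span_le.mpr ?_)
  rintro _ ⟨g, rfl⟩
  rw [SetLike.mem_coe]
  by_cases hg : p ∈ Set.range g
  · obtain ⟨c, hc⟩ := hg
    rw [det_eq_zero_of_column_eq_zero c fun r => by simp [hc, hp]]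
    exact Ideal.zero_mem _
  · have hne : ∀ c, g c ≠ p := fun c hc => hg ⟨c, hc⟩
    choose q hq using fun c => Fin.exists_succAbove_eq (hne c)
    have hq_inj : Function.Injective q := fun a b hab => g.injective (by rw [← hq, ← hq, hab])
    convert (M.submatrix id p.succAbove).det_submatrix_mem_maxMinorsIdeal ⟨q, hq_inj⟩ using 2
    ext r c
    simp [hq]

def powSubPowMatrix (k : ℕ) {ι : Type*} (a : R) (v : ι → R) : Matrix (Fin k) ι R :=
  of fun r c => v c ^ ((r : ℕ) + 1) - a ^ ((r : ℕ) + 1)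

theorem det_vandermonde_transpose_eq_det_vecCons (a : R) (v : Fin (k + 1) → R) :
    (vandermonde v)ᵀ.det
      = (of fun i c => vecCons 1 (fun r => powSubPowMatrix k a v r c) i).det := by
  refine det_eq_of_forall_row_eq_smul_add_const (vecCons 0 fun r : Fin k => a ^ ((r : ℕ) + 1))
    0 rfl fun i c => ?_
  cases i using Fin.cases <;> simp [vandermonde, powSubPowMatrix]

theorem det_vandermonde_transpose_eq_sum (a : R) (v : Fin (k + 1) → R) :
    (vandermonde v)ᵀ.det
      = ∑ j : Fin (k + 1), (-1) ^ (j : ℕ) * (powSubPowMatrix k a (v ∘ j.succAbove)).det := by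
  rw [det_vandermonde_transpose_eq_det_vecCons a, det_succ_row_zero]
  simp [powSubPowMatrix, submatrix]

theorem det_vandermonde_transpose_eq_det_powSubPowMatrix (v : Fin (k + 1) → R) :
    (vandermonde v)ᵀ.det = (powSubPowMatrix k (v 0) (v ∘ Fin.succ)).det := by
  rw [det_vandermonde_transpose_eq_det_vecCons (v 0), det_succ_column_zero, Fin.sum_univ_succ]
  simp [powSubPowMatrix, submatrix]

end Matrix

open Matrix

theorem vanIdeal_le_maxMinorsIdeal_powSubPowMatrix (K : Type*) [Field K] (n k : ℕ)
    (a : MvPolynomial (Fin n) K) :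
    vanIdeal K n k ≤ (powSubPowMatrix k a X).maxMinorsIdeal := by
  refine Ideal.span_le.mpr ?_
  rintro _ ⟨g, rfl⟩
  change (vandermonde (X ∘ g))ᵀ.det ∈ _
  rw [det_vandermonde_transpose_eq_sum a]
  exact Ideal.sum_mem _ fun j _ => Ideal.mul_mem_left _ _
    ((powSubPowMatrix k a X).det_submatrix_mem_maxMinorsIdeal (j.succAboveEmb.trans g))

theorem nMatrix_eq_submatrix_succ (K : Type*) [Field K] (m k : ℕ) :
    nMatrix K (m + 1) k = (powSubPowMatrix k (X 0) X).submatrix id Fin.succ :=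
  rfl

theorem maxMinorsIdeal_nMatrix_le_vanIdeal (K : Type*) [Field K] (m k : ℕ) :
    (nMatrix K (m + 1) k).maxMinorsIdeal ≤ vanIdeal K (m + 1) k := by
  refine Ideal.span_le.mpr ?_
  rintro _ ⟨h, rfl⟩
  let g : Fin (k + 1) ↪ Fin (m + 1) :=
    ⟨Fin.cons 0 (Fin.succ ∘ h), Fin.cons_injective_of_injective (by simp [Fin.succ_ne_zero])
      ((Fin.succ_injective _).comp h.injective)⟩
  have hg : ((vandermondeMatrix K (m + 1) k).submatrix id g).det
      = ((nMatrix K (m + 1) k).submatrix id h).det := by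
    change (vandermonde (X ∘ g))ᵀ.det = _
    rw [det_vandermonde_transpose_eq_det_powSubPowMatrix, nMatrix_eq_submatrix_succ]
    rfl
  exact hg ▸ Ideal.subset_span ⟨g, rfl⟩

theorem vanIdeal_eq_nMatrix_minors_general (K : Type*) [Field K] (n k : ℕ)
    (hn : k < n) :
    vanIdeal K n k = Ideal.span { d | ∃ g : Fin k ↪ Fin (n - 1),
      d = ((nMatrix K n k).submatrix id g).det } := by
  obtain ⟨m, rfl⟩ := Nat.exists_eq_add_one_of_ne_zero (by omega : n ≠ 0)
  change vanIdeal K (m + 1) k = (nMatrix K (m + 1) k).maxMinorsIdeal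
  refine le_antisymm ?_ (maxMinorsIdeal_nMatrix_le_vanIdeal K m k)
  calc vanIdeal K (m + 1) k ≤ (powSubPowMatrix k (X 0) X).maxMinorsIdeal :=
        vanIdeal_le_maxMinorsIdeal_powSubPowMatrix K (m + 1) k (X 0)
    _ = ((powSubPowMatrix k (X 0) X).submatrix id (0 : Fin (m + 1)).succAbove).maxMinorsIdeal :=
        (maxMinorsIdeal_submatrix_succAbove _ 0 fun r => by simp [powSubPowMatrix]).symm
    _ = (nMatrix K (m + 1) k).maxMinorsIdeal := by
        rw [Fin.succAbove_zero, nMatrix_eq_submatrix_succ]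

/-- `I_{n,k}` is generated by the maximal (`k`-size) minors of the `k × (n-1)` matrix
`N_{n,k}`. -/
theorem vanIdeal_eq_nMatrix_minors (K : Type*) [Field K] (n k : ℕ)
    (hk : 1 ≤ k) (hn : k < n) :
    vanIdeal K n k = Ideal.span { d | ∃ g : Fin k ↪ Fin (n - 1),
      d = ((nMatrix K n k).submatrix id g).det } :=
  vanIdeal_eq_nMatrix_minors_general K n k hn
end
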